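/- arXiv:2301.13561 — 6 statements merged into one kernel-verified Lean document; each statement's English description precedes it below -/
import Mathlib

section
/- Let X and Y be nonnegative random variables with equal finite right endpoints of support and let w be a decreasing weight function. If X ≤_disp Y then ξ̄^w(X) ≥ ξ̄^w(Y), and if X ≥_disp Y then ξ̄^w(X) ≤ ξ̄^w(Y). -/
/-!
If `g(G⁻¹) ≤ f(F⁻¹)` on `(0,1)`, then `F⁻¹ - G⁻¹` has nonpositive derivative and tends to `0`
at `1` (equal right endpoints), so `G⁻¹ ≤ F⁻¹`. As `w` decreases, the integrand
`u² w(F⁻¹(u)) / f(F⁻¹(u))` is then pointwise below `u² w(G⁻¹(u)) / g(G⁻¹(u))`. The latter is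
integrable: since `G⁻¹ ≥ 0` it is at most `w(0)` times `(G⁻¹)'`, the derivative of a monotone
function bounded on `(0,1)`.
-/

open MeasureTheory Set Filter Topology

section Calculus

variable {a b c : ℝ}

lemma AntitoneOn.le_of_tendsto_nhdsLT {h : ℝ → ℝ} (hh : AntitoneOn h (Ioo a b))
    (hlim : Tendsto h (𝓝[<] b) (𝓝 c)) {x : ℝ} (hx : x ∈ Ioo a b) : c ≤ h x := by
  refine le_of_tendsto hlim ?_
  filter_upwards [Ioo_mem_nhdsLT hx.2] with y hy
  exact hh hx ⟨hx.1.trans hy.1, hy.2⟩ hy.1.le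

lemma le_of_hasDerivAt_le_of_tendsto_nhdsLT {F G F' G' : ℝ → ℝ}
    (hF : ∀ x ∈ Ioo a b, HasDerivAt F (F' x) x) (hG : ∀ x ∈ Ioo a b, HasDerivAt G (G' x) x)
    (hderiv : ∀ x ∈ Ioo a b, F' x ≤ G' x)
    (hFb : Tendsto F (𝓝[<] b) (𝓝 c)) (hGb : Tendsto G (𝓝[<] b) (𝓝 c)) :
    ∀ x ∈ Ioo a b, G x ≤ F x := by
  have hanti : AntitoneOn (F - G) (Ioo a b) := by
    refine antitoneOn_of_hasDerivWithinAt_nonpos (f' := F' - G') (convex_Ioo a b)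
      (fun x hx => ((hF x hx).sub (hG x hx)).continuousAt.continuousWithinAt) ?_ ?_
    all_goals rw [interior_Ioo]
    · exact fun x hx => ((hF x hx).sub (hG x hx)).hasDerivWithinAt
    · exact fun x hx => sub_nonpos.2 (hderiv x hx)
  intro x hx
  have hlim : Tendsto (F - G) (𝓝[<] b) (𝓝 0) := by
    rw [← sub_self c]
    exact hFb.sub hGb
  simpa using hanti.le_of_tendsto_nhdsLT hlim hx

lemma integrableOn_Ioo_deriv_of_nonneg {G G' : ℝ → ℝ}
    (hderiv : ∀ x ∈ Ioo a b, HasDerivAt G (G' x) x) (hnonneg : ∀ x ∈ Ioo a b, 0 ≤ G' x)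
    (hbdd : BddBelow (G '' Ioo a b)) (hb : Tendsto G (𝓝[<] b) (𝓝 c)) :
    IntegrableOn G' (Ioo a b) := by
  rcases le_or_gt b a with hba | hab
  · simp [Ioo_eq_empty_of_le hba]
  have hcont : ContinuousOn G (Ioo a b) :=
    fun x hx => (hderiv x hx).continuousAt.continuousWithinAt
  have hmono : MonotoneOn G (Ioo a b) := by
    refine monotoneOn_of_hasDerivWithinAt_nonneg (f' := G') (convex_Ioo a b) hcont ?_ ?_
    all_goals rw [interior_Ioo]
    · exact fun x hx => (hderiv x hx).hasDerivWithinAt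
    · exact hnonneg
  have ha := hmono.tendsto_nhdsWithin_Ioo_right (nonempty_Ioo.2 hab) hbdd
  -- the extension by the one-sided limits is continuous on `Icc a b`, so the FTC bound applies
  have hext : ∀ x ∈ Ioo a b, HasDerivAt (extendFrom (Ioo a b) G) (G' x) x := fun x hx =>
    (hderiv x hx).congr_of_eventuallyEq <| eventuallyEq_of_mem (isOpen_Ioo.mem_nhds hx)
      (extendFrom_extends hcont)
  exact (intervalIntegral.integrableOn_deriv_of_nonneg
    (continuousOn_Icc_extendFrom_Ioo hcont ha hb) hext hnonneg).mono_set Ioo_subset_Ioc_self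

end Calculus

/-- `ξ̄^w(X)` after the substitution `x = F⁻¹(u)`, for `X` with density `f` and quantile
function `Finv`. -/
noncomputable def weightedCumPastExtropy (f w Finv : ℝ → ℝ) : ℝ :=
  -(1/2) * ∫ u in (0:ℝ)..1, u ^ 2 * w (Finv u) / f (Finv u)

section Extropy

variable {f g w Finv Ginv : ℝ → ℝ} {M : ℝ}

lemma integrableOn_quantile_integrand (hg : ∀ x, 0 < g x)
    (hY0 : ∀ u ∈ Ioo (0:ℝ) 1, 0 ≤ Ginv u)
    (hG' : ∀ u ∈ Ioo (0:ℝ) 1, HasDerivAt Ginv (1 / g (Ginv u)) u)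
    (hGM : Tendsto Ginv (𝓝[<] 1) (𝓝 M)) (hwdec : Antitone w) (hwnn : ∀ x, 0 ≤ w x) :
    IntegrableOn (fun u => u ^ 2 * w (Ginv u) / g (Ginv u)) (Ioo 0 1) := by
  have hdens : IntegrableOn (fun u => 1 / g (Ginv u)) (Ioo 0 1) :=
    integrableOn_Ioo_deriv_of_nonneg hG' (fun u _ => (one_div_pos.2 (hg _)).le)
      ⟨0, by rintro _ ⟨u, hu, rfl⟩; exact hY0 u hu⟩ hGM
  have hGcont : ContinuousOn Ginv (Ioo 0 1) :=
    fun u hu => (hG' u hu).continuousAt.continuousWithinAt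
  have hwG : AEMeasurable (fun u => w (Ginv u)) (volume.restrict (Ioo 0 1)) :=
    hwdec.measurable.comp_aemeasurable (hGcont.aemeasurable measurableSet_Ioo)
  have hmeas : AEStronglyMeasurable (fun u => u ^ 2 * w (Ginv u)) (volume.restrict (Ioo 0 1)) :=
    (continuous_pow 2).aestronglyMeasurable.mul hwG.aestronglyMeasurable
  have hbound : ∀ᵐ u ∂(volume.restrict (Ioo (0:ℝ) 1)), ‖u ^ 2 * w (Ginv u)‖ ≤ w 0 := by
    filter_upwards [ae_restrict_mem measurableSet_Ioo] with u hu
    have hu2 : u ^ 2 ≤ 1 := pow_le_one₀ hu.1.le hu.2.le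
    rw [Real.norm_of_nonneg (mul_nonneg (sq_nonneg u) (hwnn _))]
    calc u ^ 2 * w (Ginv u) ≤ w (Ginv u) := mul_le_of_le_one_left (hwnn _) hu2
      _ ≤ w 0 := hwdec (hY0 u hu)
  simpa only [IntegrableOn, mul_one_div] using hdens.bdd_mul hmeas hbound

lemma integral_quantile_integrand_le_of_dispersive (hf : ∀ x, 0 < f x) (hg : ∀ x, 0 < g x)
    (hY0 : ∀ u ∈ Ioo (0:ℝ) 1, 0 ≤ Ginv u)
    (hF' : ∀ u ∈ Ioo (0:ℝ) 1, HasDerivAt Finv (1 / f (Finv u)) u)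
    (hG' : ∀ u ∈ Ioo (0:ℝ) 1, HasDerivAt Ginv (1 / g (Ginv u)) u)
    (hFM : Tendsto Finv (𝓝[<] 1) (𝓝 M)) (hGM : Tendsto Ginv (𝓝[<] 1) (𝓝 M))
    (hwdec : Antitone w) (hwnn : ∀ x, 0 ≤ w x)
    (hdisp : ∀ u ∈ Ioo (0:ℝ) 1, g (Ginv u) ≤ f (Finv u)) :
    ∫ u in (0:ℝ)..1, u ^ 2 * w (Finv u) / f (Finv u) ≤
      ∫ u in (0:ℝ)..1, u ^ 2 * w (Ginv u) / g (Ginv u) := by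
  have hquantile : ∀ u ∈ Ioo (0:ℝ) 1, Ginv u ≤ Finv u :=
    le_of_hasDerivAt_le_of_tendsto_nhdsLT hF' hG'
      (fun u hu => one_div_le_one_div_of_le (hg _) (hdisp u hu)) hFM hGM
  rw [intervalIntegral.integral_of_le zero_le_one, intervalIntegral.integral_of_le zero_le_one,
    integral_Ioc_eq_integral_Ioo, integral_Ioc_eq_integral_Ioo]
  refine integral_mono_of_nonneg
    (Eventually.of_forall fun u => div_nonneg (mul_nonneg (sq_nonneg u) (hwnn _)) (hf _).le)
    (integrableOn_quantile_integrand hg hY0 hG' hGM hwdec hwnn) ?_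
  filter_upwards [ae_restrict_mem measurableSet_Ioo] with u hu
  exact div_le_div₀ (mul_nonneg (sq_nonneg u) (hwnn _))
    (mul_le_mul_of_nonneg_left (hwdec (hquantile u hu)) (sq_nonneg u)) (hg _) (hdisp u hu)

lemma weightedCumPastExtropy_le_of_dispersive (hf : ∀ x, 0 < f x) (hg : ∀ x, 0 < g x)
    (hY0 : ∀ u ∈ Ioo (0:ℝ) 1, 0 ≤ Ginv u)
    (hF' : ∀ u ∈ Ioo (0:ℝ) 1, HasDerivAt Finv (1 / f (Finv u)) u)
    (hG' : ∀ u ∈ Ioo (0:ℝ) 1, HasDerivAt Ginv (1 / g (Ginv u)) u)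
    (hFM : Tendsto Finv (𝓝[<] 1) (𝓝 M)) (hGM : Tendsto Ginv (𝓝[<] 1) (𝓝 M))
    (hwdec : Antitone w) (hwnn : ∀ x, 0 ≤ w x)
    (hdisp : ∀ u ∈ Ioo (0:ℝ) 1, g (Ginv u) ≤ f (Finv u)) :
    weightedCumPastExtropy g w Ginv ≤ weightedCumPastExtropy f w Finv :=
  mul_le_mul_of_nonpos_left
    (integral_quantile_integrand_le_of_dispersive hf hg hY0 hF' hG' hFM hGM hwdec hwnn hdisp)
    (by norm_num)

end Extropy

/-- Let `X, Y` be nonnegative random variables with densities `f, g`, quantile functions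
`Finv, Ginv`, and equal finite right endpoint of support `M`, and let `w` be a decreasing
weight. If `X ≤_disp Y` (i.e. `f(F⁻¹(u)) ≥ g(G⁻¹(u))` on `(0,1)`) then `ξ̄^w(X) ≥ ξ̄^w(Y)`,
and if `X ≥_disp Y` then `ξ̄^w(X) ≤ ξ̄^w(Y)`, where
`ξ̄^w(X) = -(1/2)∫₀¹ u² w(F⁻¹(u))/f(F⁻¹(u)) du` is the GWCPJ. -/
theorem stmt4 (f g w Finv Ginv : ℝ → ℝ) (M : ℝ)
    (hf : ∀ x, 0 < f x) (hg : ∀ x, 0 < g x)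
    (hX0 : ∀ u ∈ Ioo (0:ℝ) 1, 0 ≤ Finv u) (hY0 : ∀ u ∈ Ioo (0:ℝ) 1, 0 ≤ Ginv u)
    (hF' : ∀ u ∈ Ioo (0:ℝ) 1, HasDerivAt Finv (1 / f (Finv u)) u)
    (hG' : ∀ u ∈ Ioo (0:ℝ) 1, HasDerivAt Ginv (1 / g (Ginv u)) u)
    (hFM : Tendsto Finv (nhdsWithin 1 (Iio 1)) (nhds M))
    (hGM : Tendsto Ginv (nhdsWithin 1 (Iio 1)) (nhds M))
    (hwdec : Antitone w) (hwnn : ∀ x, 0 ≤ w x) :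
    ((∀ u ∈ Ioo (0:ℝ) 1, g (Ginv u) ≤ f (Finv u)) →
      -(1/2) * ∫ u in (0:ℝ)..1, u ^ 2 * w (Ginv u) / g (Ginv u) ≤
        -(1/2) * ∫ u in (0:ℝ)..1, u ^ 2 * w (Finv u) / f (Finv u)) ∧
    ((∀ u ∈ Ioo (0:ℝ) 1, f (Finv u) ≤ g (Ginv u)) →
      -(1/2) * ∫ u in (0:ℝ)..1, u ^ 2 * w (Finv u) / f (Finv u) ≤
        -(1/2) * ∫ u in (0:ℝ)..1, u ^ 2 * w (Ginv u) / g (Ginv u)) :=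
  ⟨weightedCumPastExtropy_le_of_dispersive hf hg hY0 hF' hG' hFM hGM hwdec hwnn,
    weightedCumPastExtropy_le_of_dispersive hg hf hX0 hG' hF' hGM hFM hwdec hwnn⟩
end

section
/- Let X be exponentially distributed with rate λ > 0 (cdf F(x) = 1 − e^{−λx}, x > 0) and w(x) = x^m with m > 0. Then the general weighted cumulative residual extropy of the one-cycle minRSSU sample of size n equals -(1/2)·(Γ(m+1)/(2λ)^{m+1})^n · (1/n!)^{m+1}. -/
open MeasureTheory Finset

theorem integral_rpow_mul_exp_neg_mul_pow_Ioi {a m : ℝ} (ha : 0 < a) (hm : -1 < m) {k : ℕ}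
    (hk : 0 < k) :
    ∫ x in Set.Ioi (0 : ℝ), x ^ m * Real.exp (-(a * x)) ^ k
      = Real.Gamma (m + 1) / ((k : ℝ) * a) ^ (m + 1) := by
  have hka : 0 < (k : ℝ) * a := by positivity
  have h := Real.integral_rpow_mul_exp_neg_mul_Ioi (by linarith : 0 < m + 1) hka
  rw [add_sub_cancel_right, Real.div_rpow zero_le_one hka.le, Real.one_rpow] at h
  rw [div_eq_inv_mul, ← one_div, ← h]
  refine setIntegral_congr_fun measurableSet_Ioi fun x _ => ?_
  rw [← Real.exp_nat_mul, mul_neg, mul_assoc]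

theorem prod_Icc_natCast_factorial (n : ℕ) : ∏ i ∈ Icc 1 n, (i : ℝ) = n.factorial := by
  rw [← Nat.cast_prod, ← Ico_add_one_right_eq_Icc, prod_Ico_id_eq_factorial]

theorem prod_Icc_div_rpow_natCast_mul {b : ℝ} (hb : 0 < b) (c s : ℝ) (n : ℕ) :
    ∏ i ∈ Icc 1 n, c / ((i : ℝ) * b) ^ s
      = (c / b ^ s) ^ n * (1 / (n.factorial : ℝ)) ^ s := by
  have hfac : (0 : ℝ) < n.factorial := by exact_mod_cast n.factorial_pos
  have hden : ∏ i ∈ Icc 1 n, ((i : ℝ) * b) ^ s = (n.factorial : ℝ) ^ s * (b ^ s) ^ n := by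
    rw [Real.finsetProd_rpow _ _ (fun i _ => by positivity), prod_mul_distrib,
      prod_Icc_natCast_factorial, prod_const, Nat.card_Icc, Nat.add_sub_cancel,
      Real.mul_rpow hfac.le (by positivity), Real.rpow_pow_comm hb.le]
  rw [prod_div_distrib, hden, prod_const, Nat.card_Icc, Nat.add_sub_cancel,
    Real.div_rpow zero_le_one hfac.le, Real.one_rpow, div_pow]
  field_simp

/-- For `X` exponential with rate `λ > 0` (survival function `F̄(x) = e^{-λx}`) and weight
`w(x) = x^m`, `m > 0`, the GWCRJ of the one-cycle minRSSU sample of size `n`,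
`-(1/2)∏_{i=1}^n ∫₀^∞ x^m (e^{-λx})^{2i} dx`, equals
`-(1/2)·(Γ(m+1)/(2λ)^{m+1})^n · (1/n!)^{m+1}`. -/
theorem stmt8 (lam m : ℝ) (hlam : 0 < lam) (hm : 0 < m) (n : ℕ) :
    -(1/2) * ∏ i ∈ Finset.Icc 1 n,
        ∫ x in Set.Ioi (0:ℝ), x ^ m * (Real.exp (-(lam * x))) ^ (2 * i)
      = -(1/2) * (Real.Gamma (m + 1) / (2 * lam) ^ (m + 1)) ^ n *
          (1 / (n.factorial : ℝ)) ^ (m + 1) := by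
  have hintegral : ∀ i ∈ Icc 1 n,
      ∫ x in Set.Ioi (0:ℝ), x ^ m * Real.exp (-(lam * x)) ^ (2 * i)
        = Real.Gamma (m + 1) / ((i : ℝ) * (2 * lam)) ^ (m + 1) := by
    intro i hi
    rw [integral_rpow_mul_exp_neg_mul_pow_Ioi hlam (by linarith)
      (Nat.mul_pos two_pos (mem_Icc.mp hi).1)]
    congr 2
    push_cast
    ring
  rw [prod_congr rfl hintegral, prod_Icc_div_rpow_natCast_mul (by positivity), mul_assoc]
end

section
/- Let X be an absolutely continuous random variable with pdf f and cdf F and nonnegative weight w. Then for every n ≥ 2, the general weighted cumulative past extropy of the maxRSSU sample dominates that of the SRS sample: ξ̄^w(X_maxRSSU^(n)) ≥ ξ̄^w(X_SRS^(n)). -/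
open MeasureTheory Set Finset

/-- Let `X` be absolutely continuous with pdf `f`, quantile function `Finv`, and nonnegative
weight `w`. For `n ≥ 2`, `ξ̄^w(X_maxRSSU^(n)) ≥ ξ̄^w(X_SRS^(n))`, where
`ξ̄^w(X_maxRSSU^(n)) = -(1/2)∏_{i=1}^n ∫₀¹ u^{2i} w(F⁻¹(u))/f(F⁻¹(u)) du` and
`ξ̄^w(X_SRS^(n)) = -(1/2)(∫₀¹ u² w(F⁻¹(u))/f(F⁻¹(u)) du)^n`. -/
theorem stmt12 (f Finv w : ℝ → ℝ) (n : ℕ) (hn : 2 ≤ n)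
    (hf : ∀ x, 0 < f x) (hw : ∀ x, 0 ≤ w x)
    (hint : ∀ i : ℕ, IntervalIntegrable
      (fun u => u ^ (2 * i) * w (Finv u) / f (Finv u)) volume 0 1) :
    -(1/2) * (∫ u in (0:ℝ)..1, u ^ 2 * w (Finv u) / f (Finv u)) ^ n ≤
      -(1/2) * ∏ i ∈ Finset.Icc 1 n,
        ∫ u in (0:ℝ)..1, u ^ (2 * i) * w (Finv u) / f (Finv u) := by
  set I : ℕ → ℝ := fun i => ∫ u in (0:ℝ)..1, u ^ (2 * i) * w (Finv u) / f (Finv u) with hI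
  have hnonneg : ∀ i, 0 ≤ I i := by
    intro i
    apply intervalIntegral.integral_nonneg (by norm_num)
    intro u hu
    have h1 : (0:ℝ) ≤ u ^ (2 * i) := pow_nonneg hu.1 _
    exact div_nonneg (mul_nonneg h1 (hw _)) (hf _).le
  have hmono : ∀ i ∈ Finset.Icc 1 n, I i ≤ I 1 := by
    intro i hi
    simp only [Finset.mem_Icc] at hi
    apply intervalIntegral.integral_mono_on (by norm_num) (hint i) (hint 1)
    intro u hu
    have h1 : u ^ (2 * i) ≤ u ^ (2 * 1) :=
      pow_le_pow_of_le_one hu.1 hu.2 (by omega)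
    have h2 : (0:ℝ) ≤ w (Finv u) / f (Finv u) := div_nonneg (hw _) (hf _).le
    calc u ^ (2 * i) * w (Finv u) / f (Finv u)
        = u ^ (2 * i) * (w (Finv u) / f (Finv u)) := by ring
      _ ≤ u ^ (2 * 1) * (w (Finv u) / f (Finv u)) := by
          exact mul_le_mul_of_nonneg_right h1 h2
      _ = u ^ (2 * 1) * w (Finv u) / f (Finv u) := by ring
  have hprod : ∏ i ∈ Finset.Icc 1 n, I i ≤ (I 1) ^ n := by
    calc ∏ i ∈ Finset.Icc 1 n, I i ≤ ∏ i ∈ Finset.Icc 1 n, I 1 :=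
          Finset.prod_le_prod (fun i _ => hnonneg i) hmono
      _ = (I 1) ^ n := by
          rw [Finset.prod_const, Nat.card_Icc]; norm_num
  have h1 : (∫ u in (0:ℝ)..1, u ^ 2 * w (Finv u) / f (Finv u)) = I 1 := by
    simp [hI]
  rw [h1]
  linarith
end

section
/- Let X be an absolutely continuous random variable with pdf f and cdf F and nonnegative weight w. Then for every n ≥ 2, the general weighted cumulative residual extropy of the minRSSU sample dominates that of the SRS sample: ξ^w(X_minRSSU^(n)) ≥ ξ^w(X_SRS^(n)). -/
open MeasureTheory Set Finset

/-- Let `X` be absolutely continuous with pdf `f`, quantile function `Finv`, and nonnegative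
weight `w`. For `n ≥ 2`, `ξ^w(X_minRSSU^(n)) ≥ ξ^w(X_SRS^(n))`, where
`ξ^w(X_minRSSU^(n)) = -(1/2)∏_{i=1}^n ∫₀¹ (1-u)^{2i} w(F⁻¹(u))/f(F⁻¹(u)) du` and
`ξ^w(X_SRS^(n)) = -(1/2)(∫₀¹ (1-u)² w(F⁻¹(u))/f(F⁻¹(u)) du)^n`. -/
theorem stmt13 (f Finv w : ℝ → ℝ) (n : ℕ) (hn : 2 ≤ n)
    (hf : ∀ x, 0 < f x) (hw : ∀ x, 0 ≤ w x)
    (hint : ∀ i : ℕ, IntervalIntegrable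
      (fun u => (1 - u) ^ (2 * i) * w (Finv u) / f (Finv u)) volume 0 1) :
    -(1/2) * (∫ u in (0:ℝ)..1, (1 - u) ^ 2 * w (Finv u) / f (Finv u)) ^ n ≤
      -(1/2) * ∏ i ∈ Finset.Icc 1 n,
        ∫ u in (0:ℝ)..1, (1 - u) ^ (2 * i) * w (Finv u) / f (Finv u) := by
  have key : ∀ i : ℕ, 1 ≤ i →
      (0 ≤ ∫ u in (0:ℝ)..1, (1 - u) ^ (2 * i) * w (Finv u) / f (Finv u)) ∧
      (∫ u in (0:ℝ)..1, (1 - u) ^ (2 * i) * w (Finv u) / f (Finv u)) ≤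
        ∫ u in (0:ℝ)..1, (1 - u) ^ 2 * w (Finv u) / f (Finv u) := by
    intro i hi
    constructor
    · apply intervalIntegral.integral_nonneg (by norm_num)
      intro u hu
      have h1 : (0:ℝ) ≤ (1 - u) ^ (2 * i) := by
        rw [mul_comm, pow_mul]; positivity
      exact div_nonneg (mul_nonneg h1 (hw _)) (hf _).le
    · have h2 : (fun u => (1 - u) ^ 2 * w (Finv u) / f (Finv u)) =
          fun u => (1 - u) ^ (2 * 1) * w (Finv u) / f (Finv u) := by
        norm_num
      rw [h2]
      apply intervalIntegral.integral_mono_on (by norm_num) (hint i) (hint 1)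
      intro u hu
      simp only [Set.mem_Icc] at hu
      have h0 : (0:ℝ) ≤ 1 - u := by linarith [hu.2]
      have h1 : (1 - u : ℝ) ≤ 1 := by linarith [hu.1]
      have hp : (1 - u) ^ (2 * i) ≤ (1 - u) ^ (2 * 1) :=
        pow_le_pow_of_le_one h0 h1 (by omega)
      gcongr
      · exact (hf _).le
      · exact hw _
  calc -(1/2) * (∫ u in (0:ℝ)..1, (1 - u) ^ 2 * w (Finv u) / f (Finv u)) ^ n
      = -(1/2) * ∏ _i ∈ Finset.Icc 1 n,
          ∫ u in (0:ℝ)..1, (1 - u) ^ 2 * w (Finv u) / f (Finv u) := by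
        rw [Finset.prod_const, Nat.card_Icc]; norm_num
    _ ≤ -(1/2) * ∏ i ∈ Finset.Icc 1 n,
          ∫ u in (0:ℝ)..1, (1 - u) ^ (2 * i) * w (Finv u) / f (Finv u) := by
        have := Finset.prod_le_prod (s := Finset.Icc 1 n)
          (f := fun i => ∫ u in (0:ℝ)..1, (1 - u) ^ (2 * i) * w (Finv u) / f (Finv u))
          (g := fun _ => ∫ u in (0:ℝ)..1, (1 - u) ^ 2 * w (Finv u) / f (Finv u))
          (fun i hi => (key i (Finset.mem_Icc.mp hi).1).1)
          (fun i hi => (key i (Finset.mem_Icc.mp hi).1).2)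
        nlinarith [this]
end

section
/- Let X be a random variable with cdf F and density f such that w(F⁻¹(u))/f(F⁻¹(u)) ≤ 1 for all u ∈ (0,1). Then the sequence n ↦ ξ^w(X_minRSSU^(n)) is increasing in n ≥ 1, i.e., ξ^w(X_minRSSU^(n+1)) ≥ ξ^w(X_minRSSU^(n)). -/
open MeasureTheory Set Finset

/-- Let `X` have density `f` and quantile function `Finv` with
`w(F⁻¹(u))/f(F⁻¹(u)) ≤ 1` on `(0,1)`. Then
`n ↦ ξ^w(X_minRSSU^(n)) = -(1/2)∏_{i=1}^n ∫₀¹ (1-u)^{2i} w(F⁻¹(u))/f(F⁻¹(u)) du`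
is increasing in `n ≥ 1`. -/
theorem stmt16 (f Finv w : ℝ → ℝ)
    (hf : ∀ x, 0 < f x) (hw : ∀ x, 0 ≤ w x)
    (hint : ∀ i : ℕ, IntervalIntegrable
      (fun u => (1 - u) ^ (2 * i) * w (Finv u) / f (Finv u)) volume 0 1)
    (h : ∀ u ∈ Ioo (0:ℝ) 1, w (Finv u) / f (Finv u) ≤ 1) :
    ∀ n : ℕ, 1 ≤ n →
      -(1/2) * ∏ i ∈ Finset.Icc 1 n,
          ∫ u in (0:ℝ)..1, (1 - u) ^ (2 * i) * w (Finv u) / f (Finv u) ≤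
        -(1/2) * ∏ i ∈ Finset.Icc 1 (n + 1),
          ∫ u in (0:ℝ)..1, (1 - u) ^ (2 * i) * w (Finv u) / f (Finv u) := by
  intro n _
  set a : ℕ → ℝ := fun i =>
    ∫ u in (0:ℝ)..1, (1 - u) ^ (2 * i) * w (Finv u) / f (Finv u) with ha
  have hnonneg : ∀ i : ℕ, 0 ≤ a i := by
    intro i
    apply intervalIntegral.integral_nonneg (by norm_num)
    intro u _
    have h1 : (0:ℝ) ≤ (1 - u) ^ (2 * i) := (even_two_mul i).pow_nonneg _
    exact div_nonneg (mul_nonneg h1 (hw _)) (hf _).le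
  have hle1 : a (n + 1) ≤ 1 := by
    have : a (n + 1) ≤ ∫ u in (0:ℝ)..1, (1:ℝ) := by
      apply intervalIntegral.integral_mono_ae_restrict (by norm_num) (hint (n+1))
        intervalIntegrable_const
      rw [MeasureTheory.Measure.restrict_congr_set Ioo_ae_eq_Icc.symm,
        Filter.EventuallyLE, MeasureTheory.ae_restrict_iff' measurableSet_Ioo]
      filter_upwards [] with u hu
      have h1 : (0:ℝ) ≤ 1 - u := by linarith [hu.2]
      have h2 : (1 - u : ℝ) ≤ 1 := by linarith [hu.1]
      have hdiv : w (Finv u) / f (Finv u) ≤ 1 := h u hu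
      have hdiv0 : 0 ≤ w (Finv u) / f (Finv u) := by
        have := (hf (Finv u)).le; have := hw (Finv u); positivity
      calc (1 - u) ^ (2 * (n + 1)) * w (Finv u) / f (Finv u)
          = (1 - u) ^ (2 * (n + 1)) * (w (Finv u) / f (Finv u)) := by ring
        _ ≤ 1 * 1 := mul_le_mul (pow_le_one₀ h1 h2) hdiv hdiv0 zero_le_one
        _ = 1 := by ring
    simpa using this
  have hprodeq : (∏ i ∈ Finset.Icc 1 (n + 1), a i)
      = (∏ i ∈ Finset.Icc 1 n, a i) * a (n + 1) := by
    rw [← Finset.prod_Icc_succ_top (by omega : 1 ≤ n + 1)]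
  have hP : 0 ≤ ∏ i ∈ Finset.Icc 1 n, a i :=
    Finset.prod_nonneg fun i _ => hnonneg i
  rw [hprodeq]
  have : (∏ i ∈ Finset.Icc 1 n, a i) * a (n + 1) ≤ ∏ i ∈ Finset.Icc 1 n, a i :=
    mul_le_of_le_one_right hP hle1
  nlinarith
end

section
/- Let X be a random variable with cdf F and density f such that w(F⁻¹(u))/f(F⁻¹(u)) ≤ 1 for all u ∈ (0,1). Then the sequence n ↦ ξ̄^w(X_maxRSSU^(n)) is increasing in n ≥ 1, i.e., ξ̄^w(X_maxRSSU^(n+1)) ≥ ξ̄^w(X_maxRSSU^(n)). -/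
open MeasureTheory Set Finset

/-- Let `X` have density `f` and quantile function `Finv` with
`w(F⁻¹(u))/f(F⁻¹(u)) ≤ 1` on `(0,1)`. Then
`n ↦ ξ̄^w(X_maxRSSU^(n)) = -(1/2)∏_{i=1}^n ∫₀¹ u^{2i} w(F⁻¹(u))/f(F⁻¹(u)) du`
is increasing in `n ≥ 1`. -/
theorem stmt17 (f Finv w : ℝ → ℝ)
    (hf : ∀ x, 0 < f x) (hw : ∀ x, 0 ≤ w x)
    (hint : ∀ i : ℕ, IntervalIntegrable
      (fun u => u ^ (2 * i) * w (Finv u) / f (Finv u)) volume 0 1)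
    (h : ∀ u ∈ Ioo (0:ℝ) 1, w (Finv u) / f (Finv u) ≤ 1) :
    ∀ n : ℕ, 1 ≤ n →
      -(1/2) * ∏ i ∈ Finset.Icc 1 n,
          ∫ u in (0:ℝ)..1, u ^ (2 * i) * w (Finv u) / f (Finv u) ≤
        -(1/2) * ∏ i ∈ Finset.Icc 1 (n + 1),
          ∫ u in (0:ℝ)..1, u ^ (2 * i) * w (Finv u) / f (Finv u) := by
  intro n hn
  set b : ℕ → ℝ := fun i => ∫ u in (0:ℝ)..1, u ^ (2 * i) * w (Finv u) / f (Finv u) with hb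
  have hnonneg : ∀ i, 0 ≤ b i := by
    intro i
    apply intervalIntegral.integral_nonneg zero_le_one
    intro u _
    apply div_nonneg _ (hf _).le
    exact mul_nonneg ((even_two_mul i).pow_nonneg u) (hw _)
  have hIoo : ∀ᵐ u ∂(volume.restrict (Icc (0:ℝ) 1)), u ∈ Ioo (0:ℝ) 1 := by
    rw [ae_iff]
    have hmeas : MeasurableSet {u : ℝ | ¬ u ∈ Ioo (0:ℝ) 1} := measurableSet_Ioo.compl
    rw [Measure.restrict_apply hmeas]
    refine measure_mono_null (fun u hu => ?_) (Set.Finite.measure_zero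
      ((Set.finite_singleton (1:ℝ)).insert 0) volume)
    obtain ⟨hu1, hu2⟩ := hu
    simp only [Set.mem_Ioo, not_and_or, not_lt, Set.mem_Icc] at hu1 hu2 ⊢
    rcases hu1 with h1 | h1
    · exact Or.inl (le_antisymm h1 hu2.1)
    · exact Or.inr (le_antisymm hu2.2 h1)
  have hle1 : ∀ i, b i ≤ 1 := by
    intro i
    have h1 : (1:ℝ) = ∫ u in (0:ℝ)..1, (1:ℝ) := by simp
    rw [hb]
    calc ∫ u in (0:ℝ)..1, u ^ (2 * i) * w (Finv u) / f (Finv u)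
        ≤ ∫ u in (0:ℝ)..1, (1:ℝ) := by
          apply intervalIntegral.integral_mono_ae_restrict zero_le_one (hint i)
            intervalIntegrable_const
          filter_upwards [hIoo] with u hu
          have hwf := h u hu
          have hwf0 : 0 ≤ w (Finv u) / f (Finv u) := div_nonneg (hw _) (hf _).le
          have hu1 : u ^ (2 * i) ≤ 1 :=
            pow_le_one₀ hu.1.le hu.2.le
          have hu0 : 0 ≤ u ^ (2 * i) := pow_nonneg hu.1.le _
          calc u ^ (2 * i) * w (Finv u) / f (Finv u)
              = u ^ (2 * i) * (w (Finv u) / f (Finv u)) := by ring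
            _ ≤ 1 * 1 := mul_le_mul hu1 hwf hwf0 zero_le_one
            _ = 1 := one_mul 1
      _ = 1 := by simp
  have hprod : (0:ℝ) ≤ ∏ i ∈ Finset.Icc 1 n, b i :=
    Finset.prod_nonneg fun i _ => hnonneg i
  have hsucc : ∏ i ∈ Finset.Icc 1 (n + 1), b i
      = (∏ i ∈ Finset.Icc 1 n, b i) * b (n + 1) :=
    Finset.prod_Icc_succ_top (Nat.le_succ_of_le hn) b
  have hkey : ∏ i ∈ Finset.Icc 1 (n + 1), b i ≤ ∏ i ∈ Finset.Icc 1 n, b i := by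
    rw [hsucc]
    calc (∏ i ∈ Finset.Icc 1 n, b i) * b (n + 1)
        ≤ (∏ i ∈ Finset.Icc 1 n, b i) * 1 :=
          mul_le_mul_of_nonneg_left (hle1 (n + 1)) hprod
      _ = _ := mul_one _
  nlinarith [hkey]
end
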